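/- Define h : ℝ → ℝ by h(ξ) = |cos ξ| + |sin ξ|. Fix λ > 0. Then the set { (τ, ξ) ∈ (0,∞)² : ξ · h(ξ)² = 2τλ² } is exactly the graph { (ξ · h(ξ)²/(2λ²), ξ) : ξ ∈ (0,∞) }; the map ξ ↦ ξ · h(ξ)²/(2λ²) is locally Lipschitz on (0,∞); and consequently the set { (τ, y) ∈ (0,∞)² : y · h(2τy²) = λ } is connected. -/
import Mathlib


/-- The function `h(ξ) = |cos ξ| + |sin ξ|`. -/
noncomputable def h (ξ : ℝ) : ℝ := |Real.cos ξ| + |Real.sin ξ|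

lemma h_one_le (ξ : ℝ) : 1 ≤ h ξ := by
  have hc := Real.abs_cos_le_one ξ
  have hs := Real.abs_sin_le_one ξ
  have hc0 : (0:ℝ) ≤ |Real.cos ξ| := abs_nonneg _
  have hs0 : (0:ℝ) ≤ |Real.sin ξ| := abs_nonneg _
  have hpy := Real.sin_sq_add_cos_sq ξ
  have h1 : Real.cos ξ ^ 2 = |Real.cos ξ| ^ 2 := (sq_abs _).symm
  have h2 : Real.sin ξ ^ 2 = |Real.sin ξ| ^ 2 := (sq_abs _).symm
  unfold h
  nlinarith [mul_nonneg hc0 (sub_nonneg.2 hc), mul_nonneg hs0 (sub_nonneg.2 hs)]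

lemma h_pos (ξ : ℝ) : 0 < h ξ := lt_of_lt_of_le one_pos (h_one_le ξ)

lemma h_le_two (ξ : ℝ) : h ξ ≤ 2 := by
  have hc := Real.abs_cos_le_one ξ
  have hs := Real.abs_sin_le_one ξ
  unfold h; linarith

lemma sin_lip (a b : ℝ) : |Real.sin a - Real.sin b| ≤ |a - b| := by
  rw [Real.sin_sub_sin, abs_mul, abs_mul, show |(2:ℝ)| = 2 from by norm_num]
  have h1 : |Real.sin ((a - b) / 2)| ≤ |a - b| / 2 := by
    simpa [abs_div] using (Real.abs_sin_le_abs (x := (a - b) / 2))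
  have h2 : |Real.cos ((a + b) / 2)| ≤ 1 := Real.abs_cos_le_one _
  calc 2 * |Real.sin ((a - b) / 2)| * |Real.cos ((a + b) / 2)|
      ≤ 2 * (|a - b| / 2) * 1 := by
        apply mul_le_mul _ h2 (abs_nonneg _) (by positivity)
        exact mul_le_mul_of_nonneg_left h1 (by norm_num)
    _ = |a - b| := by ring

lemma cos_lip (a b : ℝ) : |Real.cos a - Real.cos b| ≤ |a - b| := by
  rw [Real.cos_sub_cos, abs_mul, abs_mul, show |(-2:ℝ)| = 2 from by norm_num]
  have h1 : |Real.sin ((a - b) / 2)| ≤ |a - b| / 2 := by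
    simpa [abs_div] using (Real.abs_sin_le_abs (x := (a - b) / 2))
  have h2 : |Real.sin ((a + b) / 2)| ≤ 1 := Real.abs_sin_le_one _
  calc 2 * |Real.sin ((a + b) / 2)| * |Real.sin ((a - b) / 2)|
      ≤ 2 * 1 * (|a - b| / 2) := by
        apply mul_le_mul _ h1 (abs_nonneg _) (by positivity)
        exact mul_le_mul_of_nonneg_left h2 (by norm_num)
    _ = |a - b| := by ring

lemma h_lip (a b : ℝ) : |h a - h b| ≤ 2 * |a - b| := by
  unfold h
  have t1 : |(|Real.cos a| - |Real.cos b|)| ≤ |Real.cos a - Real.cos b| :=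
    abs_abs_sub_abs_le_abs_sub _ _
  have t2 : |(|Real.sin a| - |Real.sin b|)| ≤ |Real.sin a - Real.sin b| :=
    abs_abs_sub_abs_le_abs_sub _ _
  have t3 := cos_lip a b
  have t4 := sin_lip a b
  have t5 := abs_add_le (|Real.cos a| - |Real.cos b|) (|Real.sin a| - |Real.sin b|)
  have e : (|Real.cos a| + |Real.sin a|) - (|Real.cos b| + |Real.sin b|)
      = (|Real.cos a| - |Real.cos b|) + (|Real.sin a| - |Real.sin b|) := by ring
  rw [e]
  linarith

lemma h_continuous : Continuous h :=
  (Real.continuous_cos.abs).add (Real.continuous_sin.abs)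

/-- In the `(τ, ξ)` variables the solution set of `ξ h(ξ)² = 2τλ²` is the graph of the
locally Lipschitz map `ξ ↦ ξ h(ξ)²/(2λ²)`; consequently the solution set of
`y h(2τy²) = λ` in `(0,∞)²` is connected. -/
theorem implicit_curve_graph_and_connected (lam : ℝ) (hlam : 0 < lam) :
    {p : ℝ × ℝ | 0 < p.1 ∧ 0 < p.2 ∧ p.2 * h p.2 ^ 2 = 2 * p.1 * lam ^ 2}
      = (fun ξ : ℝ => (ξ * h ξ ^ 2 / (2 * lam ^ 2), ξ)) '' Set.Ioi 0 ∧
    LocallyLipschitzOn (Set.Ioi (0 : ℝ)) (fun ξ : ℝ => ξ * h ξ ^ 2 / (2 * lam ^ 2)) ∧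
    IsConnected {p : ℝ × ℝ | 0 < p.1 ∧ 0 < p.2 ∧ p.2 * h (2 * p.1 * p.2 ^ 2) = lam} := by
  have hlam2 : (0:ℝ) < 2 * lam ^ 2 := by positivity
  have hlamne : lam ≠ 0 := ne_of_gt hlam
  refine ⟨?_, ?_, ?_⟩
  · -- graph equality
    ext p
    constructor
    · rintro ⟨hτ, hξ, heq⟩
      refine ⟨p.2, hξ, ?_⟩
      have h1 : p.2 * h p.2 ^ 2 / (2 * lam ^ 2) = p.1 := by
        rw [heq]; field_simp
      simp only [h1]
    · rintro ⟨ξ, hξ, rfl⟩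
      have hξ' : (0:ℝ) < ξ := hξ
      refine ⟨div_pos (mul_pos hξ' (pow_pos (h_pos ξ) 2)) hlam2, hξ', ?_⟩
      field_simp
  · -- locally Lipschitz
    intro x hx
    set K : ℝ := 4 + 8 * (2 * |x| + 1) with hKdef
    have hK0 : (0:ℝ) ≤ K := by positivity
    refine ⟨Real.toNNReal (K / (2 * lam ^ 2)), Metric.ball x (|x| + 1) ∩ Set.Ioi 0, ?_, ?_⟩
    · exact Filter.inter_mem (nhdsWithin_le_nhds (Metric.ball_mem_nhds x (by positivity)))
        self_mem_nhdsWithin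
    · apply LipschitzOnWith.of_dist_le_mul
      intro a ha b hb
      have hbb : |b| ≤ 2 * |x| + 1 := by
        have h1 : dist b x < |x| + 1 := hb.1
        rw [Real.dist_eq] at h1
        have h2 := abs_sub_abs_le_abs_sub b x
        linarith
      have hhl := h_lip a b
      have hha := h_pos a
      have hhb := h_pos b
      have hha2 := h_le_two a
      have hhb2 := h_le_two b
      rw [Real.dist_eq, Real.dist_eq, Real.coe_toNNReal _ (by positivity)]
      have key : |a * h a ^ 2 - b * h b ^ 2| ≤ K * |a - b| := by
        have e1 : a * h a ^ 2 - b * h b ^ 2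
            = (a - b) * h a ^ 2 + b * ((h a + h b) * (h a - h b)) := by ring
        have e2 : |a * h a ^ 2 - b * h b ^ 2|
            ≤ |a - b| * h a ^ 2 + |b| * ((h a + h b) * |h a - h b|) := by
          rw [e1]
          refine (abs_add_le _ _).trans ?_
          rw [abs_mul, abs_mul, abs_mul,
            abs_of_nonneg (by positivity : (0:ℝ) ≤ h a ^ 2),
            abs_of_nonneg (by linarith : (0:ℝ) ≤ h a + h b)]
        have s1 : |a - b| * h a ^ 2 ≤ |a - b| * 4 := by
          apply mul_le_mul_of_nonneg_left _ (abs_nonneg _)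
          nlinarith
        have s2 : (h a + h b) * |h a - h b| ≤ 4 * (2 * |a - b|) :=
          mul_le_mul (by linarith) hhl (abs_nonneg _) (by norm_num)
        have s3 : |b| * ((h a + h b) * |h a - h b|) ≤ (2 * |x| + 1) * (4 * (2 * |a - b|)) :=
          mul_le_mul hbb s2 (mul_nonneg (by linarith) (abs_nonneg _)) (by positivity)
        calc |a * h a ^ 2 - b * h b ^ 2|
            ≤ |a - b| * h a ^ 2 + |b| * ((h a + h b) * |h a - h b|) := e2
          _ ≤ |a - b| * 4 + (2 * |x| + 1) * (4 * (2 * |a - b|)) := add_le_add s1 s3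
          _ = K * |a - b| := by rw [hKdef]; ring
      have e3 : a * h a ^ 2 / (2 * lam ^ 2) - b * h b ^ 2 / (2 * lam ^ 2)
          = (a * h a ^ 2 - b * h b ^ 2) / (2 * lam ^ 2) := by ring
      rw [e3, abs_div, abs_of_pos hlam2, div_mul_eq_mul_div]
      gcongr
  · -- connectedness
    have hset : {p : ℝ × ℝ | 0 < p.1 ∧ 0 < p.2 ∧ p.2 * h (2 * p.1 * p.2 ^ 2) = lam}
        = (fun ξ : ℝ => (ξ * h ξ ^ 2 / (2 * lam ^ 2), lam / h ξ)) '' Set.Ioi 0 := by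
      ext p
      constructor
      · rintro ⟨hτ, hy, heq⟩
        have hyne : p.2 ≠ 0 := ne_of_gt hy
        refine ⟨2 * p.1 * p.2 ^ 2, Set.mem_Ioi.mpr (by positivity), ?_⟩
        set ξ := 2 * p.1 * p.2 ^ 2 with hξdef
        have hhne : h ξ ≠ 0 := ne_of_gt (h_pos ξ)
        have hhp : h ξ = lam / p.2 := by
          field_simp
          linear_combination heq
        have h2 : lam / h ξ = p.2 := by
          rw [hhp]; field_simp
        have h1 : ξ * h ξ ^ 2 / (2 * lam ^ 2) = p.1 := by
          rw [hhp, hξdef]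
          field_simp
        simp only [h1, h2]
      · rintro ⟨ξ, hξ, rfl⟩
        have hξ' : (0:ℝ) < ξ := hξ
        have hh := h_pos ξ
        have hhne : h ξ ≠ 0 := ne_of_gt hh
        refine ⟨div_pos (mul_pos hξ' (pow_pos hh 2)) hlam2, div_pos hlam hh, ?_⟩
        have harg : 2 * (ξ * h ξ ^ 2 / (2 * lam ^ 2)) * (lam / h ξ) ^ 2 = ξ := by
          field_simp
        rw [harg]
        exact div_mul_cancel₀ lam hhne
    rw [hset]
    apply IsConnected.image (isConnected_Ioi (a := (0:ℝ)))
    apply Continuous.continuousOn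
    exact Continuous.prodMk
      ((continuous_id.mul (h_continuous.pow 2)).div_const _)
      (continuous_const.div h_continuous fun x => ne_of_gt (h_pos x))
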